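/- Let G be a finite graph with c connected components and let M be a matroid. Then M is the cycle matroid M(G) of G if and only if G is a framework for M and r(M) ≤ |V(G)| − c. -/

import Mathlib

open Set Matroid
open scoped Classical

namespace QuasiGraphicPaper

universe u v

/-- A finite multigraph: a set `V` of vertices (in an ambient type `α`), a set `E` of
edges (in an ambient type `β`), and an incidence function assigning to each edge an
unordered pair of endpoints; loop-edges and parallel edges are allowed. -/
structure Graph (α : Type u) (β : Type v) where
  V : Set α
  E : Set β
  ends : β → Sym2 α
  finV : V.Finite
  finE : E.Finite
  ends_mem : ∀ ⦃e⦄, e ∈ E → ∀ ⦃x⦄, x ∈ ends e → x ∈ V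

namespace Graph

variable {α : Type u} {β : Type v}

/-- `e` is a loop-edge of `G` at the vertex `v`. -/
def IsLoopAt (G : Graph α β) (e : β) (v : α) : Prop :=
  e ∈ G.E ∧ G.ends e = Sym2.diag v

/-- `loops_G(v)`: the set of loop-edges of `G` at `v`. -/
def loopsAt (G : Graph α β) (v : α) : Set β := {e | G.IsLoopAt e v}

/-- Two vertices are adjacent if some edge of `G` has them as its two endpoints. -/
def Adj (G : Graph α β) (u v : α) : Prop := ∃ e ∈ G.E, G.ends e = s(u, v)

/-- A graph is connected if any two of its vertices are joined by a walk.
(The graph with no vertices is connected.) -/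
def Connected (G : Graph α β) : Prop :=
  ∀ u ∈ G.V, ∀ v ∈ G.V, Relation.ReflTransGen G.Adj u v

/-- Delete a set `X` of vertices: remove the vertices in `X` and all edges meeting `X`. -/
def deleteVertices (G : Graph α β) (X : Set α) : Graph α β where
  V := G.V \ X
  E := {e ∈ G.E | ∀ x ∈ G.ends e, x ∉ X}
  ends := G.ends
  finV := G.finV.sdiff
  finE := G.finE.subset (sep_subset _ _)
  ends_mem := fun e he x hx => ⟨G.ends_mem he.1 hx, he.2 x hx⟩

/-- `G − v`: delete the single vertex `v`. -/
abbrev deleteVertex (G : Graph α β) (v : α) : Graph α β := G.deleteVertices {v}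

/-- `G − e`: delete the edge `e` (keeping all vertices). -/
def deleteEdge (G : Graph α β) (e : β) : Graph α β where
  V := G.V
  E := G.E \ {e}
  ends := G.ends
  finV := G.finV
  finE := G.finE.sdiff
  ends_mem := fun f hf x hx => G.ends_mem hf.1 hx

/-- `G[X]`: the subgraph of `G` with edge set `X` (intersected with `E(G)`) and
no isolated vertices. -/
def restrictEdges (G : Graph α β) (X : Set β) : Graph α β where
  V := {v | ∃ e ∈ X ∩ G.E, v ∈ G.ends e}
  E := X ∩ G.E
  ends := G.ends
  finV := G.finV.subset (by rintro v ⟨e, ⟨-, he⟩, hv⟩; exact G.ends_mem he hv)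
  finE := G.finE.subset inter_subset_right
  ends_mem := fun e he x hx => ⟨e, he, hx⟩

/-- The connected component of `G` containing the vertex `v`, as a graph. -/
def componentOf (G : Graph α β) (v : α) : Graph α β where
  V := {u ∈ G.V | Relation.ReflTransGen G.Adj v u}
  E := {e ∈ G.E | ∀ x ∈ G.ends e, Relation.ReflTransGen G.Adj v x}
  ends := G.ends
  finV := G.finV.subset (sep_subset _ _)
  finE := G.finE.subset (sep_subset _ _)
  ends_mem := fun e he x hx => ⟨G.ends_mem he.1 hx, he.2 x hx⟩

/-- `H` is a connected component of `G`. -/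
def IsComponentOf (H G : Graph α β) : Prop := ∃ v ∈ G.V, H = G.componentOf v

/-- The number of connected components of `G`. -/
noncomputable def ncomponents (G : Graph α β) : ℕ :=
  {H : Graph α β | H.IsComponentOf G}.ncard

/-- `G` has at most two connected components: among any three vertices, two are joined. -/
def AtMostTwoComponents (G : Graph α β) : Prop :=
  ∀ u ∈ G.V, ∀ v ∈ G.V, ∀ w ∈ G.V,
    Relation.ReflTransGen G.Adj u v ∨ Relation.ReflTransGen G.Adj u w ∨
      Relation.ReflTransGen G.Adj v w

/-- The degree of a vertex: loop-edges count twice. -/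
noncomputable def degree (G : Graph α β) (v : α) : ℕ :=
  ({e ∈ G.E | v ∈ G.ends e ∧ ¬ (G.ends e).IsDiag}).ncard +
    2 * ({e ∈ G.E | G.ends e = Sym2.diag v}).ncard

/-- `G` is a cycle: it is connected, has at least one edge, and every vertex has
degree two. -/
def IsCycleGraph (G : Graph α β) : Prop :=
  G.E.Nonempty ∧ G.Connected ∧ ∀ v ∈ G.V, G.degree v = 2

/-- `C` is (the edge set of) a cycle of `G`. -/
def CycleSet (G : Graph α β) (C : Set β) : Prop :=
  C ⊆ G.E ∧ (G.restrictEdges C).IsCycleGraph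

/-- A forest: a graph with no cycles (in particular no loop-edges). -/
def IsForest (G : Graph α β) : Prop := ∀ C, ¬ G.CycleSet C

/-- `H` is a subgraph of `G`. -/
def IsSubgraph (H G : Graph α β) : Prop := H.V ⊆ G.V ∧ H.E ⊆ G.E ∧ H.ends = G.ends

/-- `G` is `k`-connected if `G − X` is connected for every vertex set `X` with `|X| < k`. -/
def KConnected (G : Graph α β) (k : ℕ) : Prop :=
  ∀ X : Set α, X.encard < k → (G.deleteVertices X).Connected

/-- A theta: a `2`-connected graph with exactly two vertices of degree three, all
other vertices having degree two. -/
def IsTheta (H : Graph α β) : Prop :=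
  H.KConnected 2 ∧
    ∃ a ∈ H.V, ∃ b ∈ H.V, a ≠ b ∧ H.degree a = 3 ∧ H.degree b = 3 ∧
      ∀ v ∈ H.V, v ≠ a → v ≠ b → H.degree v = 2

/-- `G / e`: contract the non-loop edge `e` with endpoints `x` and `y`
(identifying `y` with `x` and deleting `e`). -/
noncomputable def contractEdge (G : Graph α β) (e : β) (x y : α) (he : e ∈ G.E)
    (hxy : G.ends e = s(x, y)) (hne : x ≠ y) : Graph α β where
  V := G.V \ {y}
  E := G.E \ {e}
  ends := fun f => (G.ends f).map (fun w => if w = y then x else w)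
  finV := G.finV.sdiff
  finE := G.finE.sdiff
  ends_mem := by
    rintro f ⟨hf, -⟩ z hz
    rw [Sym2.mem_map] at hz
    obtain ⟨w, hw, rfl⟩ := hz
    by_cases hwy : w = y
    · rw [if_pos hwy]
      have hx : x ∈ G.ends e := by rw [hxy]; exact Sym2.mem_mk_left x y
      exact ⟨G.ends_mem he hx, by simp [hne]⟩
    · rw [if_neg hwy]
      exact ⟨G.ends_mem hf hw, by simp [hwy]⟩

/-- `G ∘ e`: for a loop-edge `e` at a vertex `v` which is the unique loop-edge at `v`,
delete `v` and `e`, and replace every other edge `f = vw` at `v` by a loop-edge at `w`. -/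
noncomputable def circ (G : Graph α β) (e : β) (v : α)
    (hno : ∀ f ∈ G.E, G.ends f = Sym2.diag v → f = e) : Graph α β where
  V := G.V \ {v}
  E := G.E \ {e}
  ends := fun f =>
    if h : f ∈ G.E ∧ f ≠ e ∧ v ∈ G.ends f then Sym2.diag (Sym2.Mem.other h.2.2)
    else G.ends f
  finV := G.finV.sdiff
  finE := G.finE.sdiff
  ends_mem := by
    rintro f ⟨hf, hfe⟩ z hz
    have hfe' : f ≠ e := fun h' => hfe (by simp [h'])
    by_cases h : f ∈ G.E ∧ f ≠ e ∧ v ∈ G.ends f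
    · rw [dif_pos h] at hz
      have hze : z = Sym2.Mem.other h.2.2 := by
        have h2 : z ∈ s(Sym2.Mem.other h.2.2, Sym2.Mem.other h.2.2) := hz
        rw [Sym2.mem_iff] at h2
        tauto
      subst hze
      refine ⟨G.ends_mem hf (Sym2.other_mem h.2.2), ?_⟩
      simp only [mem_singleton_iff]
      intro hzv
      apply h.2.1
      apply hno f hf
      show G.ends f = s(v, v)
      rw [← Sym2.other_spec h.2.2, hzv]
    · rw [dif_neg h] at hz
      refine ⟨G.ends_mem hf hz, ?_⟩
      simp only [mem_singleton_iff]
      intro hzv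
      subst hzv
      exact h ⟨hf, hfe', hz⟩

end Graph

/-! ### Matroid notions -/

variable {α : Type u} {β : Type v}

/-- The rank `r_M(X)` of a set `X` in a matroid `M`: the maximum size of an
independent subset of `X`. -/
noncomputable def rank (M : Matroid β) (X : Set β) : ℕ :=
  (⨆ I ∈ {I : Set β | M.Indep I ∧ I ⊆ X}, I.encard).toNat

/-- `C` is a circuit of `M` : a minimal dependent set. -/
def IsCircuit (M : Matroid β) (C : Set β) : Prop :=
  M.Dep C ∧ ∀ D, D ⊂ C → M.Indep D

/-- `M \ D` : delete the set `D` from the matroid `M`. -/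
def deleteM (M : Matroid β) (D : Set β) : Matroid β := M ↾ (M.E \ D)

/-- `M / C` : contract the set `C` in the matroid `M`. -/
def contractM (M : Matroid β) (C : Set β) : Matroid β := (M✶ ↾ (M✶.E \ C))✶

/-- `G` is a weak framework for `M`: conditions (1)–(3). -/
def WeakFramework (G : Graph α β) (M : Matroid β) : Prop :=
  G.E = M.E ∧
  (∀ H : Graph α β, H.IsComponentOf G → rank M H.E ≤ H.V.ncard) ∧
  (∀ v ∈ G.V,
    M.closure (G.deleteVertex v).E ⊆ (G.deleteVertex v).E ∪ G.loopsAt v)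

/-- `G` is a framework for `M`: conditions (1)–(4). -/
def Framework (G : Graph α β) (M : Matroid β) : Prop :=
  WeakFramework G M ∧
    ∀ C, IsCircuit M C → (G.restrictEdges C).AtMostTwoComponents

/-- `M` is the cycle matroid `M(G)` of `G` : the ground set of `M` is `E(G)`, and the
circuits of `M` are exactly the edge sets of cycles of `G`. -/
def IsCycleMatroidOf (G : Graph α β) (M : Matroid β) : Prop :=
  M.E = G.E ∧ ∀ C, IsCircuit M C ↔ G.CycleSet C

/-- A matroid is graphic if it is the cycle matroid of some graph. -/
def Graphic (M : Matroid β) : Prop :=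
  ∃ (γ : Type v) (G : Graph γ β), IsCycleMatroidOf G M

/-- A matroid is quasi-graphic if it has a framework. -/
def QuasiGraphic (M : Matroid β) : Prop :=
  ∃ (γ : Type v) (G : Graph γ β), Framework G M

/-- `M` is a lift of `N` if some single-element extension `M'` of `M` satisfies
`M' \ e = M` and `M' / e = N`. -/
def IsLiftOf (M N : Matroid β) : Prop :=
  ∃ M' : Matroid (Option β), (none : Option β) ∈ M'.E ∧
    deleteM M' {none} = M.map some (Option.some_injective β).injOn ∧
    contractM M' {none} = N.map some (Option.some_injective β).injOn

/-- `M` is a lifted-graphic matroid: for some single-element extension `M'` of `M`,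
`M' / e` is graphic. -/
def LiftedGraphic (M : Matroid β) : Prop :=
  ∃ M' : Matroid (Option β), (none : Option β) ∈ M'.E ∧
    deleteM M' {none} = M.map some (Option.some_injective β).injOn ∧
    Graphic (contractM M' {none})

/-- `(M, V)` is a framed matroid: `V` is a basis of `M` and every element of `M` is
spanned by a subset of `V` with at most two elements. -/
def FramedMatroid {γ : Type u} (M : Matroid γ) (V : Set γ) : Prop :=
  M.IsBase V ∧ ∀ e ∈ M.E, ∃ S ⊆ V, S.ncard ≤ 2 ∧ e ∈ M.closure S

/-- `M` is a frame matroid: `M = M' \ V` for some framed matroid `(M', V)`. -/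
def FrameMatroid (M : Matroid β) : Prop :=
  ∃ (γ : Type v) (M' : Matroid (β ⊕ γ)) (V : Set (β ⊕ γ)),
    FramedMatroid M' V ∧
      deleteM M' V = M.map Sum.inl Sum.inl_injective.injOn

/-- `M` is `3`-connected: it has no `k`-separation for `k ≤ 2`. -/
def ThreeConnected (M : Matroid β) : Prop :=
  ∀ X ⊆ M.E, ∀ k : ℕ, k ≤ 2 → (k : ℕ∞) ≤ X.encard → (k : ℕ∞) ≤ (M.E \ X).encard →
    rank M M.E + k ≤ rank M X + rank M (M.E \ X)

/-- `M` is representable over some field. -/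
def Representable (M : Matroid β) : Prop :=
  ∃ (F : Type v) (_ : Field F) (W : Type v) (_ : AddCommGroup W) (_ : Module F W)
    (φ : β → W), ∀ I ⊆ M.E, (M.Indep I ↔ LinearIndependent F (fun x : I => φ x))

/-- A collection `B` of cycles of `G` satisfies the theta-property if there is no
theta-subgraph of `G` with exactly two of its three cycles in `B`. -/
def ThetaProperty (G : Graph α β) (B : Set (Set β)) : Prop :=
  ∀ H : Graph α β, H.IsSubgraph G → H.IsTheta →
    ∀ C1 C2 C3, H.CycleSet C1 → H.CycleSet C2 → H.CycleSet C3 →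
      C1 ≠ C2 → C2 ≠ C3 → C1 ≠ C3 → C1 ∈ B → C2 ∈ B → C3 ∈ B

/-!
For the cycle matroid the independent sets are the forests, and a forest meeting only vertices
of a finite set `S` has `|S| - k` edges when it splits `S` into `k` classes; this gives
condition (2) and the rank bound. Circuits are cycles, hence connected (condition (4)) and of
degree two at each of their vertices, so no circuit uses exactly one non-loop edge at a vertex
(condition (3)).

Conversely, condition (3) gives every vertex of a circuit degree at least two, so every circuit
contains a cycle and every forest is independent. A spanning forest has `|V| - c ≥ r(M)` edges,
hence is a basis; the fundamental circuit of an edge `e` is then a cycle by a degree count, and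
any cycle through `e` inside the forest plus `e` must coincide with it, so cycles are dependent.
-/

open Relation

lemma _root_.Sym2.count_toMultiset_mk {α : Type*} [DecidableEq α] (a b v : α) :
    s(a, b).toMultiset.count v = (if a = v then 1 else 0) + (if b = v then 1 else 0) := by
  simp only [Sym2.toMultiset, Sym2.lift_mk, Multiset.coe_count, List.count_cons, List.count_nil,
    beq_iff_eq]
  omega

lemma _root_.Sym2.count_toMultiset {α : Type*} [DecidableEq α] (z : Sym2 α) (v : α) :
    z.toMultiset.count v = if z = Sym2.diag v then 2 else if v ∈ z then 1 else 0 := by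
  induction z using Sym2.ind with
  | _ a b =>
    rw [Sym2.count_toMultiset_mk]
    by_cases ha : a = v <;> by_cases hb : b = v <;> simp_all [Sym2.diag, eq_comm]

lemma _root_.Sym2.eq_diag_of_isDiag_of_mem {α : Type*} {z : Sym2 α} {v : α} (hd : z.IsDiag)
    (hv : v ∈ z) : z = Sym2.diag v := by
  induction z using Sym2.ind with
  | _ a b =>
    obtain rfl := Sym2.mk_isDiag_iff.mp hd
    obtain rfl | rfl := Sym2.mem_iff.mp hv <;> rfl

lemma _root_.Set.Finite.ncard_sep_eq_card_filter {γ : Type*} {X : Set γ} (hX : X.Finite)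
    (p : γ → Prop) [DecidablePred p] : {e ∈ X | p e}.ncard = (hX.toFinset.filter p).card := by
  rw [← Set.ncard_coe_finset]
  congr 1
  ext e
  simp

lemma _root_.Set.ncard_image_le_of_eq_imp {γ δ ε : Type*} {s : Set γ} (hs : s.Finite)
    {f : γ → δ} {g : γ → ε} (h : ∀ a ∈ s, ∀ b ∈ s, f a = f b → g a = g b) :
    (g '' s).ncard ≤ (f '' s).ncard := by
  set P := (fun a => (f a, g a)) '' s
  have hinj : InjOn Prod.fst P := by
    rintro _ ⟨a, ha, rfl⟩ _ ⟨b, hb, rfl⟩ hab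
    simp only at hab
    simp [hab, h a ha b hb hab]
  calc (g '' s).ncard = (Prod.snd '' P).ncard := by rw [image_image]
    _ ≤ P.ncard := ncard_image_le (hs.image _)
    _ = (Prod.fst '' P).ncard := hinj.ncard_image.symm
    _ = (f '' s).ncard := by rw [image_image]

namespace Graph

section EdgeSets

variable (G : Graph α β)

def AdjIn (X : Set β) (u v : α) : Prop := ∃ e ∈ X, G.ends e = s(u, v)

def ReachIn (X : Set β) : α → α → Prop := ReflTransGen (G.AdjIn X)

def vertsIn (X : Set β) : Set α := {v | ∃ e ∈ X, v ∈ G.ends e}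

def nonloopsIn (X : Set β) (v : α) : Set β := {e ∈ X | v ∈ G.ends e ∧ ¬(G.ends e).IsDiag}

def loopsIn (X : Set β) (v : α) : Set β := {e ∈ X | G.ends e = Sym2.diag v}

noncomputable def degIn (X : Set β) (v : α) : ℕ :=
  (G.nonloopsIn X v).ncard + 2 * (G.loopsIn X v).ncard

def IsAcyclicSet (X : Set β) : Prop := ∀ C ⊆ X, ¬ G.CycleSet C

def reachClass (X : Set β) (S : Set α) (v : α) : Set α := {u ∈ S | G.ReachIn X v u}

noncomputable def numClasses (X : Set β) (S : Set α) : ℕ := (G.reachClass X S '' S).ncard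

/-- `vs 0, es 0, vs 1, …, es (n - 1), vs n` is a path of length `n` with edges in `X`. -/
def IsPathIn (X : Set β) (vs : ℕ → α) (es : ℕ → β) (n : ℕ) : Prop :=
  (∀ i < n, es i ∈ X ∧ G.ends (es i) = s(vs i, vs (i + 1))) ∧ InjOn vs (Iic n)

end EdgeSets

variable {G : Graph α β} {X Y : Set β} {S : Set α} {u v w : α}

lemma restrictEdges_V {C : Set β} (hC : C ⊆ G.E) : (G.restrictEdges C).V = G.vertsIn C := by
  simp only [restrictEdges, vertsIn, inter_eq_self_of_subset_left hC]

lemma restrictEdges_E {C : Set β} (hC : C ⊆ G.E) : (G.restrictEdges C).E = C :=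
  inter_eq_self_of_subset_left hC

lemma restrictEdges_adj {C : Set β} (hC : C ⊆ G.E) : (G.restrictEdges C).Adj = G.AdjIn C := by
  ext u v
  simp only [Adj, AdjIn, restrictEdges, inter_eq_self_of_subset_left hC]

lemma restrictEdges_degree {C : Set β} (hC : C ⊆ G.E) (v : α) :
    (G.restrictEdges C).degree v = G.degIn C v := by
  simp only [degree, degIn, nonloopsIn, loopsIn, restrictEdges, inter_eq_self_of_subset_left hC]

lemma cycleSet_iff {C : Set β} :
    G.CycleSet C ↔ C ⊆ G.E ∧ C.Nonempty ∧
      (∀ u ∈ G.vertsIn C, ∀ v ∈ G.vertsIn C, G.ReachIn C u v) ∧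
      ∀ v ∈ G.vertsIn C, G.degIn C v = 2 := by
  refine ⟨fun ⟨hC, h⟩ => ⟨hC, ?_⟩, fun ⟨hC, h⟩ => ⟨hC, ?_⟩⟩ <;>
    simpa only [IsCycleGraph, Connected, restrictEdges_V hC, restrictEdges_E hC,
      restrictEdges_adj hC, restrictEdges_degree hC, ReachIn] using h

lemma vertsIn_mono (h : X ⊆ Y) : G.vertsIn X ⊆ G.vertsIn Y :=
  fun _ ⟨e, he, hv⟩ => ⟨e, h he, hv⟩

lemma vertsIn_subset (hX : X ⊆ G.E) : G.vertsIn X ⊆ G.V :=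
  fun _ ⟨_, he, hv⟩ => G.ends_mem (hX he) hv

lemma AdjIn.symm (h : G.AdjIn X u v) : G.AdjIn X v u :=
  let ⟨e, he, hends⟩ := h
  ⟨e, he, hends.trans Sym2.eq_swap⟩

lemma ReachIn.symm (h : G.ReachIn X u v) : G.ReachIn X v u := by
  induction h with
  | refl => exact .refl
  | tail _ hab ih => exact ReflTransGen.head hab.symm ih

lemma ReachIn.trans (h : G.ReachIn X u v) (h' : G.ReachIn X v w) : G.ReachIn X u w :=
  ReflTransGen.trans h h'

lemma ReachIn.mono (hXY : X ⊆ Y) (h : G.ReachIn X u v) : G.ReachIn Y u v :=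
  ReflTransGen.mono (fun _ _ ⟨e, he, hends⟩ => ⟨e, hXY he, hends⟩) _ _ h

lemma ReachIn.eq_of_notMem_vertsIn (h : G.ReachIn X v u) (hv : v ∉ G.vertsIn X) : u = v := by
  obtain rfl | ⟨w, ⟨e, he, hends⟩, -⟩ := h.cases_head
  · rfl
  · exact (hv ⟨e, he, hends ▸ Sym2.mem_mk_left v w⟩).elim

lemma degIn_eq_sum (hX : X.Finite) (v : α) :
    G.degIn X v = ∑ e ∈ hX.toFinset, (G.ends e).toMultiset.count v := by
  have hsplit : ∀ e, (G.ends e).toMultiset.count v =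
      (if v ∈ G.ends e ∧ ¬(G.ends e).IsDiag then 1 else 0) +
        2 * (if G.ends e = Sym2.diag v then 1 else 0) := by
    intro e
    rw [Sym2.count_toMultiset]
    by_cases hd : G.ends e = Sym2.diag v
    · simp [hd, Sym2.diag_isDiag]
    · by_cases hv : v ∈ G.ends e
      · have hnd : ¬(G.ends e).IsDiag := fun h => hd (Sym2.eq_diag_of_isDiag_of_mem h hv)
        simp [hd, hv, hnd]
      · simp [hd, hv]
  simp only [degIn, nonloopsIn, loopsIn, hX.ncard_sep_eq_card_filter, hsplit,
    Finset.sum_add_distrib, ← Finset.mul_sum, Finset.sum_boole, Nat.cast_id]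

lemma degIn_union (hX : X.Finite) (hY : Y.Finite) (hXY : Disjoint X Y) (v : α) :
    G.degIn (X ∪ Y) v = G.degIn X v + G.degIn Y v := by
  rw [degIn_eq_sum (hX.union hY), degIn_eq_sum hX, degIn_eq_sum hY, Set.Finite.toFinset_union,
    Finset.sum_union (Set.Finite.disjoint_toFinset.mpr hXY)]

lemma degIn_mono (hY : Y.Finite) (hXY : X ⊆ Y) (v : α) : G.degIn X v ≤ G.degIn Y v := by
  rw [← union_sdiff_cancel hXY, degIn_union (hY.subset hXY) hY.sdiff disjoint_sdiff_right]
  omega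

lemma degIn_eq_zero_iff (hX : X.Finite) : G.degIn X v = 0 ↔ v ∉ G.vertsIn X := by
  simp [degIn_eq_sum hX, Finset.sum_eq_zero_iff, vertsIn]

lemma degIn_singleton (e : β) (v : α) : G.degIn {e} v = (G.ends e).toMultiset.count v := by
  simp [degIn_eq_sum (Set.finite_singleton e)]

lemma sum_degIn (hX : X.Finite) {S : Finset α} (hS : G.vertsIn X ⊆ S) :
    ∑ v ∈ S, G.degIn X v = 2 * X.ncard := by
  simp_rw [degIn_eq_sum hX]
  rw [Finset.sum_comm, Finset.sum_congr rfl fun e he =>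
    Multiset.sum_count_eq_card fun v hv => hS ⟨e, by simpa using he, by simpa using hv⟩]
  simp [Sym2.card_toMultiset, Set.ncard_eq_toFinset_card _ hX, mul_comm]

lemma one_le_count_ends {e : β} (hv : v ∈ G.ends e) : 1 ≤ (G.ends e).toMultiset.count v :=
  Multiset.one_le_count_iff_mem.mpr (Sym2.mem_toMultiset.mpr hv)

lemma exists_leaf_edge (hX : X.Finite) (hv : v ∈ G.vertsIn X) (hdeg : G.degIn X v ≤ 1) :
    ∃ e ∈ X, v ∈ G.ends e ∧ ¬(G.ends e).IsDiag ∧ ∀ f ∈ X, v ∈ G.ends f → f = e := by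
  obtain ⟨e, he, hve⟩ := hv
  refine ⟨e, he, hve, fun hd => ?_, fun f hf hvf => ?_⟩
  · have hle := degIn_mono (G := G) hX (singleton_subset_iff.mpr he) v
    rw [degIn_singleton, Sym2.count_toMultiset, if_pos (Sym2.eq_diag_of_isDiag_of_mem hd hve)]
      at hle
    omega
  · by_contra hfe
    have hle := degIn_mono (G := G) hX (pair_subset he hf) v
    rw [← singleton_union, degIn_union (finite_singleton e) (finite_singleton f)
      (disjoint_singleton.mpr (Ne.symm hfe)), degIn_singleton, degIn_singleton] at hle
    have := one_le_count_ends hve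
    have := one_le_count_ends hvf
    omega

lemma degIn_eq_one {e : β} (he : e ∈ X) (hve : v ∈ G.ends e) (hnd : ¬(G.ends e).IsDiag)
    (honly : ∀ f ∈ X, v ∈ G.ends f → f = e) : G.degIn X v = 1 := by
  have hnonloops : G.nonloopsIn X v = {e} := by
    ext f
    simp only [nonloopsIn, mem_sep_iff, mem_singleton_iff]
    exact ⟨fun ⟨hf, hvf, _⟩ => honly f hf hvf, by rintro rfl; exact ⟨he, hve, hnd⟩⟩
  have hloops : G.loopsIn X v = ∅ := by
    ext f
    simp only [loopsIn, mem_sep_iff, mem_empty_iff_false, iff_false, not_and]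
    intro hf hfv
    obtain rfl := honly f hf (hfv ▸ (Sym2.mem_mk_left v v : v ∈ Sym2.diag v))
    exact hnd (hfv ▸ Sym2.diag_isDiag v)
  simp [degIn, hnonloops, hloops]

lemma cycleSet_singleton_of_isDiag {e : β} (he : e ∈ G.E) (hd : (G.ends e).IsDiag) :
    G.CycleSet {e} := by
  obtain ⟨x, hx⟩ : ∃ x, G.ends e = Sym2.diag x := ⟨_, (Sym2.diag_diagElem hd).symm⟩
  have hverts : G.vertsIn {e} = {x} := by
    ext v
    simp [vertsIn, hx, Sym2.diag, Sym2.mem_iff]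
  refine cycleSet_iff.mpr ⟨singleton_subset_iff.mpr he, singleton_nonempty e, ?_, ?_⟩ <;>
    simp only [hverts, mem_singleton_iff]
  · rintro u rfl v rfl
    exact .refl
  · rintro v rfl
    rw [degIn_singleton, Sym2.count_toMultiset, if_pos hx]

lemma IsAcyclicSet.anti (h : G.IsAcyclicSet Y) (hXY : X ⊆ Y) : G.IsAcyclicSet X :=
  fun C hC => h C (hC.trans hXY)

section Cycles

variable {C C' : Set β}

lemma CycleSet.subset_E (h : G.CycleSet C) : C ⊆ G.E := h.1

lemma CycleSet.finite (h : G.CycleSet C) : C.Finite := G.finE.subset h.1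

lemma CycleSet.nonempty (h : G.CycleSet C) : C.Nonempty := (cycleSet_iff.mp h).2.1

lemma CycleSet.reachIn (h : G.CycleSet C) (hu : u ∈ G.vertsIn C) (hv : v ∈ G.vertsIn C) :
    G.ReachIn C u v :=
  (cycleSet_iff.mp h).2.2.1 u hu v hv

lemma CycleSet.degIn_eq (h : G.CycleSet C) (hv : v ∈ G.vertsIn C) : G.degIn C v = 2 :=
  (cycleSet_iff.mp h).2.2.2 v hv

lemma CycleSet.degIn_eq_two_or_zero (h : G.CycleSet C) (v : α) :
    G.degIn C v = 2 ∨ G.degIn C v = 0 := by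
  by_cases hv : v ∈ G.vertsIn C
  · exact .inl (h.degIn_eq hv)
  · exact .inr ((degIn_eq_zero_iff h.finite).mpr hv)

lemma CycleSet.eq_of_subset (hC : G.CycleSet C) (hC' : G.CycleSet C') (h : C' ⊆ C) :
    C' = C := by
  have hclosed : ∀ v ∈ G.vertsIn C', ∀ f ∈ C, v ∈ G.ends f → f ∈ C' := by
    intro v hv f hf hvf
    by_contra hfC'
    have hsplit := degIn_union (G := G) (hC.finite.subset h) hC.finite.sdiff
      disjoint_sdiff_right v
    rw [union_sdiff_cancel h, hC.degIn_eq (vertsIn_mono h hv), hC'.degIn_eq hv] at hsplit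
    exact (degIn_eq_zero_iff hC.finite.sdiff).mp (by omega) ⟨f, ⟨hf, hfC'⟩, hvf⟩
  have hreach : ∀ u w, u ∈ G.vertsIn C' → G.ReachIn C u w → w ∈ G.vertsIn C' := by
    intro u w hu huw
    induction huw with
    | refl => exact hu
    | tail _ hbc ih =>
      obtain ⟨f, hf, hends⟩ := hbc
      exact ⟨f, hclosed _ ih f hf (hends ▸ Sym2.mem_mk_left _ _),
        hends ▸ Sym2.mem_mk_right _ _⟩
  refine subset_antisymm h fun f hf => ?_
  obtain ⟨e, he⟩ := hC'.nonempty
  have hx' : (G.ends e).out.1 ∈ G.vertsIn C' := ⟨e, he, Sym2.out_fst_mem _⟩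
  have hx : (G.ends f).out.1 ∈ G.vertsIn C := ⟨f, hf, Sym2.out_fst_mem _⟩
  exact hclosed _ (hreach _ _ hx' (hC.reachIn (vertsIn_mono h hx') hx)) f hf (Sym2.out_fst_mem _)

end Cycles

lemma cycleSet_range_of_cyclic {n : ℕ} {u : Fin (n + 2) → α} {c : Fin (n + 2) → β}
    (hu : Function.Injective u) (hc : Function.Injective c) (hcE : ∀ k, c k ∈ G.E)
    (hends : ∀ k, G.ends (c k) = s(u k, u (k + 1))) : G.CycleSet (range c) := by
  have hverts : G.vertsIn (range c) = range u := by
    ext v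
    simp only [vertsIn, mem_range, exists_exists_eq_and, hends, Sym2.mem_iff]
    constructor
    · rintro ⟨k, rfl | rfl⟩ <;> exact ⟨_, rfl⟩
    · rintro ⟨k, rfl⟩
      exact ⟨k, .inl rfl⟩
  have hfin : (range c).Finite := finite_range c
  refine cycleSet_iff.mpr ⟨range_subset_iff.mpr hcE, range_nonempty c, ?_, ?_⟩ <;>
    simp only [hverts, mem_range, forall_exists_index, forall_apply_eq_imp_iff]
  · have h0 : ∀ k, G.ReachIn (range c) (u 0) (u k) := by
      intro k
      induction k using Fin.induction with
      | zero => exact .refl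
      | succ i ih =>
        exact ih.tail ⟨c i.castSucc, mem_range_self _, by rw [hends, Fin.coeSucc_eq_succ]⟩
    exact fun j k => (h0 j).symm.trans (h0 k)
  · intro j
    rw [degIn_eq_sum hfin, hfin.toFinset_range, Finset.sum_image fun _ _ _ _ h => hc h]
    simp only [hends, Sym2.count_toMultiset_mk, hu.eq_iff, Finset.sum_add_distrib,
      ← eq_sub_iff_add_eq, Finset.sum_ite_eq', Finset.mem_univ, if_true]

section Paths

variable {vs : ℕ → α} {es : ℕ → β} {n : ℕ}

lemma IsPathIn.add_one_le_ncard (h : G.IsPathIn X vs es n) (hX : X ⊆ G.E) (hn : 0 < n) :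
    n + 1 ≤ G.V.ncard := by
  have hvs : vs '' Iic n ⊆ G.V := by
    rintro _ ⟨i, hi, rfl⟩
    obtain hi | rfl := (mem_Iic.mp hi).lt_or_eq
    · exact G.ends_mem (hX (h.1 i hi).1) ((h.1 i hi).2 ▸ Sym2.mem_mk_left _ _)
    · obtain ⟨he, hends⟩ := h.1 (i - 1) (by omega)
      rw [Nat.sub_add_cancel hn] at hends
      exact G.ends_mem (hX he) (hends ▸ Sym2.mem_mk_right _ _)
  calc n + 1 = (vs '' Iic n).ncard := by
        rw [h.2.ncard_image, ← Finset.coe_Iic, ncard_coe_finset, Nat.card_Iic]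
    _ ≤ G.V.ncard := ncard_le_ncard hvs G.finV

lemma IsPathIn.snoc (h : G.IsPathIn X vs es n) {f : β} (hf : f ∈ X)
    (hends : G.ends f = s(vs n, w)) (hw : ∀ i ≤ n, w ≠ vs i) :
    G.IsPathIn X (Function.update vs (n + 1) w) (Function.update es n f) (n + 1) := by
  refine ⟨fun i hi => ?_, fun i hi j hj hij => ?_⟩
  · obtain hi | rfl := (Nat.lt_succ_iff.mp hi).lt_or_eq
    · simpa [Function.update_of_ne hi.ne, Function.update_of_ne (by omega : i ≠ n + 1),
        Function.update_of_ne (by omega : i + 1 ≠ n + 1)] using h.1 i hi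
    · simpa [Function.update_of_ne (by omega : i ≠ i + 1)] using ⟨hf, hends⟩
  · simp only [mem_Iic] at hi hj
    obtain hi | rfl := hi.lt_or_eq <;> obtain hj | rfl := hj.lt_or_eq
    · simp only [Function.update_of_ne hi.ne, Function.update_of_ne hj.ne] at hij
      exact h.2 (mem_Iic.mpr (by omega)) (mem_Iic.mpr (by omega)) hij
    · simp only [Function.update_of_ne hi.ne, Function.update_self] at hij
      exact (hw i (by omega) hij.symm).elim
    · simp only [Function.update_of_ne hj.ne, Function.update_self] at hij
      exact (hw j (by omega) hij).elim
    · rfl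

lemma exists_maximal_isPathIn (hX : X ⊆ G.E) {e : β} (he : e ∈ X)
    (hnd : ¬(G.ends e).IsDiag) :
    ∃ n vs es, 0 < n ∧ G.IsPathIn X vs es n ∧
      ∀ f ∈ X, ∀ w, G.ends f = s(vs n, w) → ∃ i ≤ n, w = vs i := by
  by_contra! hext
  obtain ⟨a, b, hab⟩ : ∃ a b, G.ends e = s(a, b) := ⟨_, _, (Quot.out_eq (G.ends e)).symm⟩
  have hpath : ∀ k, ∃ vs es, G.IsPathIn X vs es (k + 1) := by
    intro k
    induction k with
    | zero =>
      refine ⟨fun i => if i = 0 then a else b, fun _ => e, fun i hi => ?_,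
        fun i hi j hj hij => ?_⟩
      · obtain rfl : i = 0 := by omega
        simpa using ⟨he, hab⟩
      · have hne : a ≠ b := fun h => hnd (by rw [hab, h]; exact Sym2.diag_isDiag b)
        simp only [mem_Iic] at hi hj
        interval_cases i <;> interval_cases j <;> simp_all [Ne.symm hne]
    | succ k ih =>
      obtain ⟨vs, es, h⟩ := ih
      obtain ⟨f, hf, w, hends, hw⟩ := hext (k + 1) vs es (by omega) h
      exact ⟨_, _, h.snoc hf hends hw⟩
  obtain ⟨vs, es, h⟩ := hpath G.V.ncard
  have := h.add_one_le_ncard hX (by omega)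
  omega

lemma IsPathIn.eq_of_vertex_eq (h : G.IsPathIn X vs es n) {i j : ℕ} (hi : i ≤ n) (hj : j ≤ n)
    (hij : vs i = vs j) : i = j :=
  h.2 (mem_Iic.mpr hi) (mem_Iic.mpr hj) hij

lemma IsPathIn.eq_of_edge_eq (h : G.IsPathIn X vs es n) {i j : ℕ} (hi : i < n) (hj : j < n)
    (hij : es i = es j) : i = j := by
  have hends := (h.1 i hi).2
  rw [hij, (h.1 j hj).2, Sym2.eq_iff] at hends
  rcases hends with ⟨h1, -⟩ | ⟨h1, h2⟩
  · exact (h.eq_of_vertex_eq hj.le hi.le h1).symm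
  · have := h.eq_of_vertex_eq (i := j) (j := i + 1) (by omega) (by omega) h1
    have := h.eq_of_vertex_eq (i := j + 1) (j := i) (by omega) (by omega) h2
    omega

lemma IsPathIn.drop (h : G.IsPathIn X vs es n) {i : ℕ} (hi : i ≤ n) :
    G.IsPathIn X (fun k => vs (i + k)) (fun k => es (i + k)) (n - i) := by
  refine ⟨fun k hk => ?_, fun k hk l hl hkl => ?_⟩
  · simpa only [add_assoc] using h.1 (i + k) (by omega)
  · simp only [mem_Iic] at hk hl
    have := h.eq_of_vertex_eq (by omega) (by omega) hkl
    omega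

lemma IsPathIn.exists_cycleSet_of_closing (h : G.IsPathIn X vs es (n + 1)) (hX : X ⊆ G.E)
    {f : β} (hf : f ∈ X) (hends : G.ends f = s(vs (n + 1), vs 0)) (hfn : f ≠ es n) :
    ∃ C ⊆ X, G.CycleSet C := by
  let c : Fin (n + 2) → β := fun k => if (k : ℕ) < n + 1 then es k else f
  have hcX : ∀ k, c k ∈ X := fun k => by
    dsimp only [c]
    split_ifs with hk
    exacts [(h.1 k hk).1, hf]
  have hf_ne : ∀ k < n + 1, es k ≠ f := by
    intro k hk hkf
    have hk' := (h.1 k hk).2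
    rw [hkf, hends, Sym2.eq_iff] at hk'
    rcases hk' with ⟨h1, -⟩ | ⟨h1, h2⟩
    · have := h.eq_of_vertex_eq le_rfl hk.le h1
      omega
    · obtain rfl := h.eq_of_vertex_eq (i := 0) (j := k) (by omega) (by omega) h2
      obtain rfl : n = 0 := by have := h.eq_of_vertex_eq (by omega) (by omega) h1; omega
      exact hfn hkf.symm
  refine ⟨range c, range_subset_iff.mpr hcX, cycleSet_range_of_cyclic (u := fun k => vs k)
    (fun k l hkl => Fin.ext (h.eq_of_vertex_eq (by omega) (by omega) hkl)) (fun k l hkl => ?_)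
    (fun k => hX (hcX k)) (fun k => ?_)⟩
  · dsimp only [c] at hkl
    split_ifs at hkl with hk hl hl
    · exact Fin.ext (h.eq_of_edge_eq hk hl hkl)
    · exact (hf_ne k hk hkl).elim
    · exact (hf_ne l hl hkl.symm).elim
    · exact Fin.ext (by omega)
  · by_cases hk : (k : ℕ) < n + 1
    · have hk1 : ((k + 1 : Fin (n + 2)) : ℕ) = k + 1 :=
        Fin.val_add_one_of_lt (by rw [Fin.lt_def]; simpa using hk)
      simp only [c, if_pos hk, hk1, (h.1 k hk).2]
    · obtain rfl : k = Fin.last (n + 1) := Fin.ext (by simp; omega)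
      simp [c, hends, Fin.last_add_one]

end Paths

/-- Take a longest path; a second edge at its last vertex must lead back onto the path, and
closes a cycle there. -/
theorem exists_cycleSet_subset_of_two_le_degIn (hX : X ⊆ G.E) (hne : X.Nonempty)
    (hdeg : ∀ v ∈ G.vertsIn X, 2 ≤ G.degIn X v) : ∃ C ⊆ X, G.CycleSet C := by
  by_cases hloop : ∃ e ∈ X, (G.ends e).IsDiag
  · obtain ⟨e, he, hd⟩ := hloop
    exact ⟨{e}, singleton_subset_iff.mpr he, cycleSet_singleton_of_isDiag (hX he) hd⟩
  push Not at hloop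
  obtain ⟨e, he⟩ := hne
  obtain ⟨N, vs, es, hN, h, hmax⟩ := exists_maximal_isPathIn hX he (hloop e he)
  obtain ⟨hlast, hlast_ends⟩ := h.1 (N - 1) (by omega)
  rw [Nat.sub_add_cancel hN] at hlast_ends
  have hvN : vs N ∈ G.ends (es (N - 1)) := hlast_ends ▸ Sym2.mem_mk_right _ _
  obtain ⟨f, hf, hfne, hvf⟩ : ∃ f ∈ X, f ≠ es (N - 1) ∧ vs N ∈ G.ends f := by
    by_contra! honly
    have := degIn_eq_one hlast hvN (hloop _ hlast) fun f hf hvf =>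
      by_contra fun h => honly f hf h hvf
    have := hdeg _ ⟨_, hlast, hvN⟩
    omega
  obtain ⟨i, hi, hw⟩ := hmax f hf _ (Sym2.other_spec hvf).symm
  have hfends : G.ends f = s(vs N, vs i) := by rw [← hw, Sym2.other_spec hvf]
  obtain ⟨m, rfl⟩ : ∃ m, N = i + (m + 1) := by
    obtain hi | rfl := hi.lt_or_eq
    · exact ⟨N - i - 1, by omega⟩
    · exact (hloop f hf (hfends ▸ Sym2.diag_isDiag _)).elim
  have hdrop := h.drop hi
  rw [show i + (m + 1) - i = m + 1 by omega] at hdrop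
  exact hdrop.exists_cycleSet_of_closing hX hf (by simpa using hfends)
    (by simpa [add_assoc] using hfne)

lemma reachClass_eq_iff (hv : v ∈ S) :
    G.reachClass X S u = G.reachClass X S v ↔ G.ReachIn X u v := by
  refine ⟨fun h => ?_, fun h => ?_⟩
  · have hv' : v ∈ G.reachClass X S v := ⟨hv, .refl⟩
    exact (h ▸ hv').2
  · ext w
    exact and_congr_right fun _ => ⟨h.symm.trans, h.trans⟩

lemma numClasses_le_of_reachIn_imp (hS : S.Finite)
    (h : ∀ u ∈ S, ∀ v ∈ S, G.ReachIn X u v → G.ReachIn Y u v) :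
    G.numClasses Y S ≤ G.numClasses X S :=
  Set.ncard_image_le_of_eq_imp hS fun u hu v hv huv =>
    (reachClass_eq_iff hv).mpr (h u hu v hv ((reachClass_eq_iff hv).mp huv))

lemma numClasses_anti (hS : S.Finite) (hXY : X ⊆ Y) : G.numClasses Y S ≤ G.numClasses X S :=
  numClasses_le_of_reachIn_imp hS fun _ _ _ _ => ReachIn.mono hXY

lemma numClasses_empty (S : Set α) : G.numClasses ∅ S = S.ncard := by
  refine InjOn.ncard_image fun u hu v hv huv => ?_
  exact ((reachClass_eq_iff hv).mp huv).symm.eq_of_notMem_vertsIn fun ⟨_, he, _⟩ => he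

lemma reachIn_of_numClasses_le_one (hS : S.Finite) (h : G.numClasses X S ≤ 1) (hu : u ∈ S)
    (hv : v ∈ S) : G.ReachIn X u v :=
  (reachClass_eq_iff hv).mp <| (ncard_le_one (hS.image _)).mp h _ ⟨u, hu, rfl⟩ _ ⟨v, hv, rfl⟩

lemma one_le_numClasses (hS : S.Finite) (hne : S.Nonempty) : 1 ≤ G.numClasses X S :=
  (ncard_pos (hS.image _)).mpr (hne.image _)

lemma ReachIn.diff_leaf {x y a b : α} {e : β} (h : G.ReachIn X a b) (ha : a ≠ y)
    (hends : G.ends e = s(x, y)) (hleaf : ∀ f ∈ X, y ∈ G.ends f → f = e) :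
    G.ReachIn (X \ {e}) a b ∨ (b = y ∧ G.ReachIn (X \ {e}) a x) := by
  have hy : y ∉ G.vertsIn (X \ {e}) := fun ⟨f, ⟨hf, hfe⟩, hyf⟩ => hfe (hleaf f hf hyf)
  induction h with
  | refl => exact .inl .refl
  | @tail c d _ hcd ih =>
    obtain ⟨g, hg, hgends⟩ := hcd
    by_cases hge : g = e
    · subst hge
      rw [hends, Sym2.eq_iff] at hgends
      obtain ⟨rfl, rfl⟩ | ⟨rfl, rfl⟩ := hgends
      · exact .inr ⟨rfl, ih.elim id (·.2)⟩
      · refine .inl (ih.elim (fun hac => ?_) (·.2))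
        exact (ha (hac.symm.eq_of_notMem_vertsIn hy)).elim
    · obtain hac | ⟨rfl, -⟩ := ih
      · exact .inl (hac.tail ⟨g, ⟨hg, hge⟩, hgends⟩)
      · exact (hge (hleaf g hg (hgends ▸ Sym2.mem_mk_left _ _))).elim

lemma numClasses_diff_leaf (hS : S.Finite) {x y : α} {e : β} (he : e ∈ X)
    (hends : G.ends e = s(x, y)) (hxy : x ≠ y) (hx : x ∈ S) (hy : y ∈ S)
    (hleaf : ∀ f ∈ X, y ∈ G.ends f → f = e) :
    G.numClasses (X \ {e}) S = G.numClasses X S + 1 := by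
  set T := S \ {y}
  have hST : S = insert y T := (insert_sdiff_self_of_mem hy).symm
  have hxT : x ∈ T := ⟨hx, hxy⟩
  have hclass_y : G.reachClass (X \ {e}) S y = {y} := by
    ext u
    refine ⟨fun ⟨_, h⟩ => h.eq_of_notMem_vertsIn ?_, by rintro rfl; exact ⟨hy, .refl⟩⟩
    exact fun ⟨f, ⟨hf, hfe⟩, hyf⟩ => hfe (hleaf f hf hyf)
  have hdel : G.numClasses (X \ {e}) S = (G.reachClass (X \ {e}) S '' T).ncard + 1 := by
    rw [numClasses, hST, image_insert_eq, ← hST, hclass_y]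
    refine ncard_insert_of_notMem (fun ⟨a, ha, hay⟩ => ha.2 ?_)
      ((hS.subset sdiff_subset).image _)
    have haa : a ∈ G.reachClass (X \ {e}) S a := ⟨ha.1, .refl⟩
    rwa [hay, mem_singleton_iff] at haa
  have hfull : G.numClasses X S = (G.reachClass X S '' T).ncard := by
    have hyx : G.reachClass X S y = G.reachClass X S x :=
      (reachClass_eq_iff hx).mpr (ReflTransGen.single ⟨e, he, hends.trans Sym2.eq_swap⟩)
    rw [numClasses, hST, image_insert_eq, ← hST, hyx, insert_eq_of_mem (mem_image_of_mem _ hxT)]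
  have hiff : ∀ a ∈ T, ∀ b ∈ T,
      G.reachClass X S a = G.reachClass X S b ↔
        G.reachClass (X \ {e}) S a = G.reachClass (X \ {e}) S b := by
    intro a ha b hb
    rw [reachClass_eq_iff hb.1, reachClass_eq_iff hb.1]
    refine ⟨fun h => ?_, ReachIn.mono sdiff_subset⟩
    obtain h | ⟨rfl, -⟩ := h.diff_leaf ha.2 hends hleaf
    exacts [h, (hb.2 rfl).elim]
  have hT : T.Finite := hS.subset sdiff_subset
  rw [hdel, hfull, le_antisymm
    (Set.ncard_image_le_of_eq_imp hT fun a ha b hb => (hiff a ha b hb).mpr)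
    (Set.ncard_image_le_of_eq_imp hT fun a ha b hb => (hiff a ha b hb).mp)]

lemma IsAcyclicSet.ncard_add_numClasses (hac : G.IsAcyclicSet X) (hX : X ⊆ G.E)
    (hS : S.Finite) (hXS : G.vertsIn X ⊆ S) : X.ncard + G.numClasses X S = S.ncard := by
  induction hn : X.ncard generalizing X with
  | zero =>
    obtain rfl := (ncard_eq_zero (G.finE.subset hX)).mp hn
    rw [numClasses_empty, zero_add]
  | succ n ih =>
    have hfin : X.Finite := G.finE.subset hX
    obtain ⟨y, hy, hdeg⟩ : ∃ y ∈ G.vertsIn X, G.degIn X y ≤ 1 := by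
      by_contra! h
      obtain ⟨C, hCX, hC⟩ := exists_cycleSet_subset_of_two_le_degIn hX
        ((ncard_pos hfin).mp (by omega)) fun v hv => h v hv
      exact hac C hCX hC
    obtain ⟨e, he, hye, hnd, hleaf⟩ := exists_leaf_edge hfin hy hdeg
    obtain ⟨x, hends⟩ : ∃ x, G.ends e = s(x, y) :=
      ⟨_, by rw [Sym2.eq_swap, Sym2.other_spec hye]⟩
    have hxy : x ≠ y := fun h => hnd (by rw [hends, h]; exact Sym2.diag_isDiag y)
    have hx : x ∈ S := hXS ⟨e, he, by rw [hends]; exact Sym2.mem_mk_left _ _⟩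
    have hdel := numClasses_diff_leaf hS he hends hxy hx (hXS ⟨e, he, hye⟩) hleaf
    have := ih (hac.anti sdiff_subset) (sdiff_subset.trans hX)
      ((vertsIn_mono sdiff_subset).trans hXS) (by rw [ncard_sdiff_singleton_of_mem he, hn]; rfl)
    omega

/-- Counting: the forest `C \ {e}` has at most `|V(C)| - 1` edges, while the degree sum forces
`|C| ≥ |V(C)|`; equality throughout makes `C \ {e}` connected and every degree exactly two. -/
lemma cycleSet_of_isAcyclicSet_diff {C : Set β} {e : β} (hC : C ⊆ G.E) (he : e ∈ C)
    (hdeg : ∀ v ∈ G.vertsIn C, 2 ≤ G.degIn C v) (hac : G.IsAcyclicSet (C \ {e})) :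
    G.CycleSet C ∧ ∀ u ∈ G.vertsIn C, ∀ v ∈ G.vertsIn C, G.ReachIn (C \ {e}) u v := by
  have hCfin : C.Finite := G.finE.subset hC
  have hSfin : (G.vertsIn C).Finite := G.finV.subset (vertsIn_subset hC)
  have hSne : (G.vertsIn C).Nonempty := ⟨_, e, he, Sym2.out_fst_mem _⟩
  have hforest :=
    hac.ncard_add_numClasses (sdiff_subset.trans hC) hSfin (vertsIn_mono sdiff_subset)
  rw [ncard_sdiff_singleton_of_mem he] at hforest
  have hcomp := one_le_numClasses (G := G) (X := C \ {e}) hSfin hSne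
  have hsum := sum_degIn (G := G) hCfin (S := hSfin.toFinset) (by simp)
  have hle : ∑ _v ∈ hSfin.toFinset, 2 ≤ ∑ v ∈ hSfin.toFinset, G.degIn C v :=
    Finset.sum_le_sum fun v hv => hdeg v (hSfin.mem_toFinset.mp hv)
  rw [Finset.sum_const, smul_eq_mul, ← ncard_eq_toFinset_card _ hSfin] at hle
  have hpos : 0 < C.ncard := (ncard_pos hCfin).mpr ⟨e, he⟩
  have hreach : ∀ u ∈ G.vertsIn C, ∀ v ∈ G.vertsIn C, G.ReachIn (C \ {e}) u v :=
    fun u hu v hv => reachIn_of_numClasses_le_one hSfin (by omega) hu hv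
  have hdeg2 : ∀ v ∈ G.vertsIn C, G.degIn C v = 2 := by
    have heq := (Finset.sum_eq_sum_iff_of_le (s := hSfin.toFinset) (f := fun _ => 2)
      fun v hv => hdeg v (hSfin.mem_toFinset.mp hv)).mp (by
        rw [hsum, Finset.sum_const, smul_eq_mul, ← ncard_eq_toFinset_card _ hSfin]; omega)
    exact fun v hv => (heq v (hSfin.mem_toFinset.mpr hv)).symm
  exact ⟨cycleSet_iff.mpr ⟨hC, ⟨e, he⟩, fun u hu v hv => (hreach u hu v hv).mono sdiff_subset,
    hdeg2⟩, hreach⟩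

lemma CycleSet.isAcyclicSet_diff {C : Set β} (hC : G.CycleSet C) {e : β} (he : e ∈ C) :
    G.IsAcyclicSet (C \ {e}) := fun D hD hDcyc => by
  obtain rfl := hC.eq_of_subset hDcyc (hD.trans sdiff_subset)
  exact (hD he).2 rfl

lemma CycleSet.reachIn_diff {C : Set β} (hC : G.CycleSet C) {e : β} (he : e ∈ C)
    (hu : u ∈ G.vertsIn C) (hv : v ∈ G.vertsIn C) : G.ReachIn (C \ {e}) u v :=
  (cycleSet_of_isAcyclicSet_diff hC.subset_E he (fun _ hw => (hC.degIn_eq hw).ge)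
    (hC.isAcyclicSet_diff he)).2 u hu v hv

lemma CycleSet.exists_cycleSet_subset_union_diff {Z C : Set β} (hZ : G.CycleSet Z)
    (hC : G.CycleSet C) (hne : Z ≠ C) : ∃ D ⊆ (Z \ C) ∪ (C \ Z), G.CycleSet D := by
  have hZC : (Z \ C).Finite := hZ.finite.sdiff
  have hCZ : (C \ Z).Finite := hC.finite.sdiff
  have hI : (Z ∩ C).Finite := hZ.finite.inter_of_left C
  refine exists_cycleSet_subset_of_two_le_degIn (union_subset (sdiff_subset.trans hZ.subset_E)
    (sdiff_subset.trans hC.subset_E)) ?_ fun v hv => ?_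
  · by_contra hempty
    rw [not_nonempty_iff_eq_empty, union_empty_iff, sdiff_eq_empty, sdiff_eq_empty] at hempty
    exact hne (hempty.1.antisymm hempty.2)
  · have hD := degIn_union (G := G) hZC hCZ disjoint_sdiff_sdiff v
    have hZsplit := degIn_union (G := G) hZC hI disjoint_sdiff_inter v
    have hCsplit := degIn_union (G := G) hCZ (hC.finite.inter_of_left Z) disjoint_sdiff_inter v
    rw [sdiff_union_inter] at hZsplit
    rw [sdiff_union_inter, inter_comm C Z] at hCsplit
    have hpos := (degIn_eq_zero_iff (hZC.union hCZ)).not.mpr (not_not.mpr hv)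
    have := hZ.degIn_eq_two_or_zero v
    have := hC.degIn_eq_two_or_zero v
    omega

lemma exists_spanning_forest_superset {X₀ : Set β} (hX₀ : X₀ ⊆ G.E) (hac : G.IsAcyclicSet X₀) :
    ∃ F, X₀ ⊆ F ∧ F ⊆ G.E ∧ G.IsAcyclicSet F ∧ F.ncard + G.numClasses G.E G.V = G.V.ncard := by
  obtain ⟨F, ⟨hX₀F, hFE, hFac⟩, hFmax⟩ := Set.Finite.exists_maximalFor id
    {F | X₀ ⊆ F ∧ F ⊆ G.E ∧ G.IsAcyclicSet F}
    (G.finE.finite_subsets.subset fun F hF => hF.2.1) ⟨X₀, subset_rfl, hX₀, hac⟩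
  have hspan : ∀ g ∈ G.E, ∀ a b, G.ends g = s(a, b) → G.ReachIn F a b := by
    intro g hg a b hends
    by_cases hgF : g ∈ F
    · exact ReflTransGen.single ⟨g, hgF, hends⟩
    obtain ⟨C, hCF, hC⟩ : ∃ C ⊆ insert g F, G.CycleSet C := by
      by_contra! hno
      exact hgF (hFmax ⟨hX₀F.trans (subset_insert g F), insert_subset hg hFE, hno⟩
        (subset_insert g F) (mem_insert g F))
    have hgC : g ∈ C := by
      by_contra hgC
      exact hFac C (fun f hf => (hCF hf).resolve_left fun h => hgC (h ▸ hf)) hC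
    refine (hC.reachIn_diff hgC ⟨g, hgC, by rw [hends]; exact Sym2.mem_mk_left _ _⟩
      ⟨g, hgC, by rw [hends]; exact Sym2.mem_mk_right _ _⟩).mono fun f hf => ?_
    exact (hCF hf.1).resolve_left hf.2
  have hreach : ∀ u v, G.ReachIn G.E u v → G.ReachIn F u v := by
    intro u v huv
    induction huv with
    | refl => exact .refl
    | tail _ hbc ih =>
      obtain ⟨g, hg, hends⟩ := hbc
      exact ih.trans (hspan g hg _ _ hends)
  have hclasses : G.numClasses F G.V = G.numClasses G.E G.V :=
    (numClasses_anti G.finV hFE).antisymm'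
      (numClasses_le_of_reachIn_imp G.finV fun u _ v _ => hreach u v)
  exact ⟨F, hX₀F, hFE, hFac,
    hclasses ▸ hFac.ncard_add_numClasses hFE G.finV (vertsIn_subset hFE)⟩

lemma ncomponents_eq_numClasses : G.ncomponents = G.numClasses G.E G.V := by
  have hV : ∀ v, (G.componentOf v).V = G.reachClass G.E G.V v := fun _ => rfl
  have hinj : InjOn (fun H : Graph α β => H.V) {H | H.IsComponentOf G} := by
    rintro _ ⟨a, ha, rfl⟩ _ ⟨b, hb, rfl⟩ hab
    have hrel : ReflTransGen G.Adj a = ReflTransGen G.Adj b := by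
      have hab' : G.ReachIn G.E a b := (reachClass_eq_iff hb).mp hab
      ext x
      exact ⟨hab'.symm.trans, hab'.trans⟩
    simp only [componentOf, hrel]
  rw [ncomponents, ← hinj.ncard_image, numClasses]
  congr 1
  ext T
  simp [IsComponentOf, hV]

end Graph

section Matroids

variable {M : Matroid β}

lemma isCircuit_iff_matroidIsCircuit {C : Set β} : IsCircuit M C ↔ M.IsCircuit C :=
  Matroid.isCircuit_iff_forall_ssubset.symm

lemma rank_eq_toNat_eRk (X : Set β) : rank M X = (M.eRk X).toNat := by
  refine congrArg ENat.toNat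
    (le_antisymm (iSup₂_le fun I hI => hI.1.encard_le_eRk_of_subset hI.2) ?_)
  obtain ⟨I, hIX, hI, hcard⟩ := le_eRk_iff.mp (le_refl (M.eRk X))
  exact hcard ▸ le_iSup₂ (f := fun (J : Set β) (_ : J ∈ {J | M.Indep J ∧ J ⊆ X}) => J.encard)
    I ⟨hI, hIX⟩

lemma rank_le_of_forall_indep (hE : M.E.Finite) {X : Set β} {n : ℕ}
    (h : ∀ I, M.Indep I → I ⊆ X → I.ncard ≤ n) : rank M X ≤ n := by
  rw [rank_eq_toNat_eRk]
  refine ENat.toNat_le_of_le_natCast (eRk_le_iff.mpr fun I hIX hI => ?_)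
  rw [← (hE.subset hI.subset_ground).cast_ncard_eq]
  exact_mod_cast h I hI hIX

lemma _root_.Matroid.Indep.ncard_le_rank (hE : M.E.Finite) {I X : Set β} (hI : M.Indep I)
    (hIX : I ⊆ X) : I.ncard ≤ rank M X := by
  have hfin : M.IsRkFinite X :=
    isRkFinite_inter_ground_iff.mp (M.isRkFinite_of_finite (hE.subset inter_subset_right))
  rw [rank_eq_toNat_eRk]
  exact ENat.toNat_le_toNat (hI.encard_le_eRk_of_subset hIX) (eRk_ne_top_iff.mpr hfin)

end Matroids

section CycleMatroid

variable {G : Graph α β} {M : Matroid β}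

lemma isCycleMatroidOf_iff_indep :
    IsCycleMatroidOf G M ↔ M.E = G.E ∧ ∀ I ⊆ M.E, (M.Indep I ↔ G.IsAcyclicSet I) := by
  refine ⟨fun ⟨hE, hC⟩ => ⟨hE, fun I hI => ?_⟩, fun ⟨hE, hI⟩ => ⟨hE, fun C => ?_⟩⟩
  · simp only [indep_iff_forall_subset_not_isCircuit hI, ← isCircuit_iff_matroidIsCircuit, hC]
    rfl
  · rw [isCircuit_iff_matroidIsCircuit]
    refine ⟨fun hC => ?_, fun hC => ?_⟩
    · have hCE := hC.subset_ground
      obtain ⟨Z, hZC, hZ⟩ : ∃ Z ⊆ C, G.CycleSet Z := by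
        by_contra! h
        exact hC.not_indep ((hI C hCE).mpr h)
      have hZdep : ¬ M.Indep Z := fun h => (hI Z (hZC.trans hCE)).mp h Z subset_rfl hZ
      exact hC.eq_of_not_indep_subset hZdep hZC ▸ hZ
    · have hCE : C ⊆ M.E := hE ▸ hC.subset_E
      refine isCircuit_iff_forall_ssubset.mpr ⟨⟨fun h => (hI C hCE).mp h C subset_rfl hC, hCE⟩,
        fun D hDC => (hI D (hDC.subset.trans hCE)).mpr fun Z hZD hZ => ?_⟩
      exact hDC.ne (subset_antisymm hDC.subset
        ((hC.eq_of_subset hZ (hZD.trans hDC.subset)) ▸ hZD))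

lemma IsCycleMatroidOf.isAcyclicSet_of_indep (h : IsCycleMatroidOf G M) {I : Set β}
    (hI : M.Indep I) : G.IsAcyclicSet I :=
  ((isCycleMatroidOf_iff_indep.mp h).2 I hI.subset_ground).mp hI

lemma IsCycleMatroidOf.rank_component_le (h : IsCycleMatroidOf G M) {H : Graph α β}
    (hH : H.IsComponentOf G) : rank M H.E ≤ H.V.ncard := by
  obtain ⟨v, -, rfl⟩ := hH
  refine rank_le_of_forall_indep (h.1 ▸ G.finE) fun I hI hIH => ?_
  have hIE : I ⊆ G.E := fun e he => (hIH he).1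
  have := (h.isAcyclicSet_of_indep hI).ncard_add_numClasses (S := (G.componentOf v).V) hIE
    (G.finV.subset (sep_subset _ _))
    fun u ⟨e, he, hu⟩ => ⟨G.ends_mem (hIE he) hu, (hIH he).2 u hu⟩
  omega

lemma IsCycleMatroidOf.rank_le (h : IsCycleMatroidOf G M) :
    rank M M.E ≤ G.V.ncard - G.ncomponents := by
  refine rank_le_of_forall_indep (h.1 ▸ G.finE) fun I hI _ => ?_
  have hIE : I ⊆ G.E := h.1 ▸ hI.subset_ground
  have hforest := (h.isAcyclicSet_of_indep hI).ncard_add_numClasses hIE G.finV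
    (Graph.vertsIn_subset hIE)
  have := Graph.numClasses_anti (G := G) G.finV hIE
  rw [Graph.ncomponents_eq_numClasses]
  omega

lemma IsCycleMatroidOf.closure_subset (h : IsCycleMatroidOf G M) {v : α} :
    M.closure (G.deleteVertex v).E ⊆ (G.deleteVertex v).E ∪ G.loopsAt v := by
  intro f hf
  by_cases hfv : f ∈ (G.deleteVertex v).E
  · exact .inl hfv
  have hfE : f ∈ G.E := h.1 ▸ M.closure_subset_ground _ hf
  have hvf : v ∈ G.ends f := by
    by_contra hvf
    exact hfv ⟨hfE, fun x hx hxv => hvf (mem_singleton_iff.mp hxv ▸ hx)⟩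
  by_cases hd : (G.ends f).IsDiag
  · exact .inr ⟨hfE, Sym2.eq_diag_of_isDiag_of_mem hd hvf⟩
  obtain ⟨C, hCf, hCirc, hfC⟩ := exists_isCircuit_of_mem_closure hf hfv
  have hC := (h.2 C).mp (isCircuit_iff_matroidIsCircuit.mpr hCirc)
  have honly : ∀ g ∈ C, v ∈ G.ends g → g = f := fun g hg hvg =>
    (hCf hg).resolve_right fun hg' => hg'.2 v hvg rfl
  have := hC.degIn_eq ⟨f, hfC, hvf⟩
  rw [Graph.degIn_eq_one hfC hvf hd honly] at this
  omega

lemma IsCycleMatroidOf.framework (h : IsCycleMatroidOf G M) : Framework G M := by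
  refine ⟨⟨h.1.symm, fun H hH => h.rank_component_le hH, fun v _ => h.closure_subset⟩,
    fun C hCirc => ?_⟩
  have hC := (h.2 C).mp hCirc
  intro u hu w hw _ _
  rw [Graph.restrictEdges_V hC.subset_E] at hu hw
  exact .inl (Graph.restrictEdges_adj hC.subset_E ▸ hC.reachIn hu hw)

lemma WeakFramework.two_le_degIn_of_isCircuit (hw : WeakFramework G M) {C : Set β}
    (hC : M.IsCircuit C) {v : α} (hv : v ∈ G.vertsIn C) : 2 ≤ G.degIn C v := by
  have hCE : C ⊆ G.E := hw.1 ▸ hC.subset_ground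
  by_contra! hdeg
  obtain ⟨e, he, hve, hnd, honly⟩ :=
    Graph.exists_leaf_edge (G.finE.subset hCE) hv (Nat.le_of_lt_succ hdeg)
  have hsub : C \ {e} ⊆ (G.deleteVertex v).E := fun g ⟨hg, hge⟩ =>
    ⟨hCE hg, fun x hx hxv => hge (honly g hg (mem_singleton_iff.mp hxv ▸ hx))⟩
  rcases hw.2.2 v (G.ends_mem (hCE he) hve)
    (M.closure_subset_closure hsub (hC.mem_closure_sdiff_singleton_of_mem he)) with h | h
  · exact h.2 v hve rfl
  · exact hnd (h.2 ▸ Sym2.diag_isDiag v)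

lemma WeakFramework.indep_of_isAcyclicSet (hw : WeakFramework G M) {I : Set β} (hIE : I ⊆ G.E)
    (hI : G.IsAcyclicSet I) : M.Indep I := by
  refine (indep_iff_forall_subset_not_isCircuit (hw.1 ▸ hIE)).mpr fun C hCI hC => ?_
  obtain ⟨Z, hZC, hZ⟩ := Graph.exists_cycleSet_subset_of_two_le_degIn (hCI.trans hIE)
    hC.nonempty fun v hv => hw.two_le_degIn_of_isCircuit hC hv
  exact hI Z (hZC.trans hCI) hZ

/-- For a cycle `Z ⊆ I` and `e ∈ Z`, extend `Z \ {e}` to a spanning forest `F`. The rank bound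
leaves no room for `F + e` to be independent, so it contains a circuit through `e`, which is a
cycle; it equals `Z`, since two distinct cycles through `e` inside `F + e` would leave a cycle
inside the forest `F`. -/
lemma WeakFramework.isAcyclicSet_of_indep (hw : WeakFramework G M)
    (hr : rank M M.E ≤ G.V.ncard - G.ncomponents) {I : Set β} (hI : M.Indep I) :
    G.IsAcyclicSet I := by
  intro Z hZI hZ
  have hME : M.E = G.E := hw.1.symm
  have hEfin : M.E.Finite := hME ▸ G.finE
  obtain ⟨e, heZ⟩ := hZ.nonempty
  obtain ⟨F, hZF, hFE, hFac, hFcard⟩ := Graph.exists_spanning_forest_superset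
    (sdiff_subset.trans hZ.subset_E) (hZ.isAcyclicSet_diff heZ)
  rw [← Graph.ncomponents_eq_numClasses] at hFcard
  have hF := hw.indep_of_isAcyclicSet hFE hFac
  have heF : e ∉ F := fun heF =>
    hFac Z (fun f hf => if hfe : f = e then hfe ▸ heF else hZF ⟨hf, hfe⟩) hZ
  have hdep : M.Dep (insert e F) := by
    refine dep_iff.mpr ⟨fun (hins : M.Indep (insert e F)) => ?_,
      insert_subset (hME ▸ hZ.subset_E heZ) (hME ▸ hFE)⟩
    have := hins.ncard_le_rank hEfin hins.subset_ground
    rw [ncard_insert_of_notMem heF (G.finE.subset hFE)] at this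
    omega
  obtain ⟨C, hCF, hCirc⟩ := hdep.exists_isCircuit_subset
  have hCF' : C \ {e} ⊆ F := fun f hf => (hCF hf.1).resolve_left hf.2
  have heC : e ∈ C := by
    by_contra heC
    exact hCirc.not_indep (hF.subset fun f hf => hCF' ⟨hf, fun h => heC (h ▸ hf)⟩)
  obtain ⟨hC, -⟩ := Graph.cycleSet_of_isAcyclicSet_diff (hME ▸ hCirc.subset_ground) heC
    (fun v hv => hw.two_le_degIn_of_isCircuit hCirc hv) (hFac.anti hCF')
  by_cases hZC : Z = C
  · exact hCirc.not_indep (hZC ▸ hI.subset hZI)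
  obtain ⟨D, hD, hDcyc⟩ := hZ.exists_cycleSet_subset_union_diff hC hZC
  refine hFac D (hD.trans (union_subset ?_ ?_)) hDcyc
  · exact fun f ⟨hf, hfC⟩ => hZF ⟨hf, fun h => hfC (h ▸ heC)⟩
  · exact fun f ⟨hf, hfZ⟩ => hCF' ⟨hf, fun h => hfZ (h ▸ heZ)⟩

end CycleMatroid

/-- Let `G` be a finite graph with `c` connected components and let `M` be
a matroid. Then `M` is the cycle matroid `M(G)` of `G` if and only if `G` is a framework for
`M` and `r(M) ≤ |V(G)| − c`. -/
theorem statement0 {α : Type u} {β : Type v} (G : Graph α β) (M : Matroid β) :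
    IsCycleMatroidOf G M ↔
      (Framework G M ∧ rank M M.E ≤ G.V.ncard - G.ncomponents) := by
  refine ⟨fun h => ⟨h.framework, h.rank_le⟩, fun ⟨⟨hw, _⟩, hr⟩ => ?_⟩
  refine isCycleMatroidOf_iff_indep.mpr ⟨hw.1.symm, fun I hI => ?_⟩
  exact ⟨hw.isAcyclicSet_of_indep hr, hw.indep_of_isAcyclicSet (hw.1 ▸ hI)⟩

end QuasiGraphicPaper
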